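/- arXiv:2501.14565 — 3 statements merged into one kernel-verified Lean document; each statement's English description precedes it below -/
import Mathlib

section
/- Let (Ω, F, P) be a probability space, p ∈ [1, ∞), Y ∈ L^p(P), and let 0 < β₀ < β₁ < 1. If t₀ ∈ ℝ attains the infimum defining R_{β₀}(Y) and t₁ ∈ ℝ attains the infimum defining R_{β₁}(Y), then t₀ ≤ t₁. In other words, any selection β ↦ t_Y(β) of minimizers of the higher-order risk measure is non-decreasing in the risk level β. -/
open MeasureTheory

/-- The `p`-norm `‖Z‖_p = (E[|Z|^p])^{1/p}` of a real-valued random variable. -/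
noncomputable def pnorm {Ω : Type*} [MeasurableSpace Ω] (μ : Measure Ω) (p : ℝ)
    (Z : Ω → ℝ) : ℝ :=
  (∫ ω, |Z ω| ^ p ∂μ) ^ (1 / p)

/-- The higher-order risk measure `R_β(Y) = inf_t [ t + (1−β)⁻¹ ‖(Y − t)₊‖_p ]`. -/
noncomputable def riskR {Ω : Type*} [MeasurableSpace Ω] (μ : Measure Ω) (p : ℝ) (β : ℝ)
    (Y : Ω → ℝ) : ℝ :=
  ⨅ t : ℝ, (t + (1 - β)⁻¹ * pnorm μ p (fun ω => max (Y ω - t) 0))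

/-!
Write `g t = ‖(Y - t)₊‖_p` and `a = (1 - β₀)⁻¹ < b = (1 - β₁)⁻¹`. Comparing each objective
`t + c g t` at the other's minimizer and adding gives `(b - a) (g t₁ - g t₀) ≤ 0`, so
`g t₁ ≤ g t₀`, and optimality of `t₀` then gives `t₀ - t₁ ≤ a (g t₁ - g t₀) ≤ 0`.

The analytic input is that the objective is bounded below by `E Y` (as `‖·‖₁ ≤ ‖·‖_p` on a
probability space): otherwise the real `⨅` defining `riskR` would be the junk value `0` and
`riskR` would not be a lower bound of the objective.
-/

open Set

section LpNorm

variable {Ω E : Type*} [MeasurableSpace Ω] {μ : Measure Ω} [NormedAddCommGroup E]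

lemma lpNorm_mono_exponent [IsProbabilityMeasure μ] {p q : ENNReal} (hpq : p ≤ q) {f : Ω → E}
    (hf : MemLp f q μ) : lpNorm f p μ ≤ lpNorm f q μ := by
  rw [← toReal_eLpNorm hf.1, ← toReal_eLpNorm hf.1]
  exact ENNReal.toReal_mono hf.eLpNorm_ne_top (eLpNorm_le_eLpNorm_of_exponent_le hpq hf.1)

end LpNorm

section Risk

variable {Ω : Type*} [MeasurableSpace Ω] {μ : Measure Ω} {p : ℝ}

lemma pnorm_nonneg (μ : Measure Ω) (p : ℝ) (Z : Ω → ℝ) : 0 ≤ pnorm μ p Z :=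
  Real.rpow_nonneg (integral_nonneg fun _ => by positivity) _

lemma pnorm_eq_lpNorm (hp : 0 < p) {Z : Ω → ℝ} (hZ : AEStronglyMeasurable Z μ) :
    pnorm μ p Z = lpNorm Z (ENNReal.ofReal p) μ := by
  rw [lpNorm_eq_integral_norm_rpow_toReal (by simpa using hp) ENNReal.ofReal_ne_top hZ,
    ENNReal.toReal_ofReal hp.le, pnorm, one_div]
  rfl

lemma integral_le_pnorm [IsProbabilityMeasure μ] (hp : 1 ≤ p) {Z : Ω → ℝ}
    (hZ : MemLp Z (ENNReal.ofReal p) μ) : ∫ ω, Z ω ∂μ ≤ pnorm μ p Z :=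
  calc ∫ ω, Z ω ∂μ ≤ ∫ ω, ‖Z ω‖ ∂μ := (le_abs_self _).trans (norm_integral_le_integral_norm Z)
    _ = lpNorm Z 1 μ := (lpNorm_one_eq_integral_norm hZ.1).symm
    _ ≤ lpNorm Z (ENNReal.ofReal p) μ := lpNorm_mono_exponent (by simpa using hp) hZ
    _ = pnorm μ p Z := (pnorm_eq_lpNorm (by linarith) hZ.1).symm

lemma integral_sub_le_pnorm_posPart [IsProbabilityMeasure μ] (hp : 1 ≤ p) {Y : Ω → ℝ}
    (hY : MemLp Y (ENNReal.ofReal p) μ) (t : ℝ) :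
    ∫ ω, Y ω ∂μ - t ≤ pnorm μ p (fun ω => max (Y ω - t) 0) := by
  have hYt : MemLp (fun ω => Y ω - t) (ENNReal.ofReal p) μ := hY.sub (memLp_const t)
  have hL1 : ∀ {Z : Ω → ℝ}, MemLp Z (ENNReal.ofReal p) μ → Integrable Z μ :=
    fun hZ => hZ.integrable (by simpa using hp)
  calc ∫ ω, Y ω ∂μ - t = ∫ ω, (Y ω - t) ∂μ := by simp [integral_sub (hL1 hY)]
    _ ≤ ∫ ω, max (Y ω - t) 0 ∂μ :=
      integral_mono (hL1 hYt) (hL1 hYt.pos_part) fun ω => le_max_left _ _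
    _ ≤ pnorm μ p (fun ω => max (Y ω - t) 0) := integral_le_pnorm hp hYt.pos_part

lemma riskR_le [IsProbabilityMeasure μ] (hp : 1 ≤ p) {Y : Ω → ℝ}
    (hY : MemLp Y (ENNReal.ofReal p) μ) {β : ℝ} (hβ₀ : 0 ≤ β) (hβ₁ : β < 1) (t : ℝ) :
    riskR μ p β Y ≤ t + (1 - β)⁻¹ * pnorm μ p (fun ω => max (Y ω - t) 0) := by
  have hc : 1 ≤ (1 - β)⁻¹ := one_le_inv₀ (by linarith) |>.2 (by linarith)
  refine ciInf_le ⟨∫ ω, Y ω ∂μ, ?_⟩ t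
  rintro _ ⟨s, rfl⟩
  have hs := integral_sub_le_pnorm_posPart hp hY s
  have := le_mul_of_one_le_left (pnorm_nonneg μ p fun ω => max (Y ω - s) 0) hc
  dsimp only
  linarith

lemma isMinOn_of_riskR_eq [IsProbabilityMeasure μ] (hp : 1 ≤ p) {Y : Ω → ℝ}
    (hY : MemLp Y (ENNReal.ofReal p) μ) {β : ℝ} (hβ₀ : 0 ≤ β) (hβ₁ : β < 1) {t₀ : ℝ}
    (hmin : riskR μ p β Y = t₀ + (1 - β)⁻¹ * pnorm μ p (fun ω => max (Y ω - t₀) 0)) :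
    IsMinOn (fun t => t + (1 - β)⁻¹ * pnorm μ p (fun ω => max (Y ω - t) 0)) univ t₀ :=
  isMinOn_univ_iff.2 fun t => hmin ▸ riskR_le hp hY hβ₀ hβ₁ t

end Risk

lemma le_of_isMinOn_add_mul_of_lt {g : ℝ → ℝ} {a b t₀ t₁ : ℝ} (ha : 0 ≤ a) (hab : a < b)
    (h₀ : IsMinOn (fun t => t + a * g t) univ t₀) (h₁ : IsMinOn (fun t => t + b * g t) univ t₁) :
    t₀ ≤ t₁ := by
  have h₀₁ : t₀ + a * g t₀ ≤ t₁ + a * g t₁ := h₀ (mem_univ t₁)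
  have h₁₀ : t₁ + b * g t₁ ≤ t₀ + b * g t₀ := h₁ (mem_univ t₀)
  have hg : g t₁ ≤ g t₀ :=
    le_of_mul_le_mul_left (by linarith : (b - a) * g t₁ ≤ (b - a) * g t₀) (sub_pos.2 hab)
  linarith [mul_le_mul_of_nonneg_left hg ha]

/-- Minimizers of the higher-order risk measure are non-decreasing in the risk level:
if `t₀` attains the infimum defining `R_{β₀}(Y)` and `t₁` that of `R_{β₁}(Y)` with
`β₀ < β₁`, then `t₀ ≤ t₁`. -/
theorem stmt9 {Ω : Type*} [MeasurableSpace Ω] (μ : Measure Ω) [IsProbabilityMeasure μ]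
    (p : ℝ) (hp : 1 ≤ p) (Y : Ω → ℝ) (hY : MemLp Y (ENNReal.ofReal p) μ)
    (β₀ β₁ : ℝ) (h0 : 0 < β₀) (h01 : β₀ < β₁) (h1 : β₁ < 1) (t₀ t₁ : ℝ)
    (hmin0 : riskR μ p β₀ Y = t₀ + (1 - β₀)⁻¹ * pnorm μ p (fun ω => max (Y ω - t₀) 0))
    (hmin1 : riskR μ p β₁ Y = t₁ + (1 - β₁)⁻¹ * pnorm μ p (fun ω => max (Y ω - t₁) 0)) :
    t₀ ≤ t₁ := by
  refine le_of_isMinOn_add_mul_of_lt ?_ ?_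
    (isMinOn_of_riskR_eq hp hY h0.le (h01.trans h1) hmin0)
    (isMinOn_of_riskR_eq hp hY (h0.trans h01).le h1 hmin1)
  · exact inv_nonneg.2 (by linarith)
  · exact inv_strictAnti₀ (by linarith) (by linarith)
end

section
/- Let (Ω, F, P) be a probability space, p ∈ [1, ∞), ξ₀ ∈ L^p(P), and let h : ℝ^d × Ω → ℝ be such that h(x, ·) ∈ L^p(P) for every x ∈ ℝ^d and, for P-almost every ω, the map x ↦ h(x, ω) is concave. Then the set C := { x ∈ ℝ^d : ‖(t − ξ₀)₊‖_p ≥ ‖(t − h(x, ·))₊‖_p for all t ∈ ℝ } is a convex subset of ℝ^d. -/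
/-!
For fixed `t`, the map `x ↦ (t - h(x, ω))₊` is convex for a.e. `ω`, being a convex nonincreasing
function of a concave one. Since `‖·‖_p` is monotone on nonnegative functions and satisfies
Minkowski's inequality, `x ↦ ‖(t - h(x, ·))₊‖_p` is then convex, and `C` is the intersection over
`t` of its sublevel sets.
-/

open MeasureTheory

section

open Set ENNReal

variable {Ω E : Type*} [MeasurableSpace Ω] {μ : Measure Ω} [AddCommGroup E] [Module ℝ E]

theorem pnorm_eq_toReal_eLpNorm {p : ℝ} (hp : 0 < p) {f : Ω → ℝ}
    (hf : MemLp f (ENNReal.ofReal p) μ) :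
    pnorm μ p f = (eLpNorm f (ENNReal.ofReal p) μ).toReal := by
  rw [hf.eLpNorm_eq_integral_rpow_norm (by simp [hp]) (by simp),
    ENNReal.toReal_ofReal (by positivity)]
  simp [pnorm, ENNReal.toReal_ofReal hp.le, Real.norm_eq_abs, one_div]

theorem convexOn_toReal_eLpNorm {p : ℝ≥0∞} (hp : 1 ≤ p) {s : Set E} (hs : Convex ℝ s)
    {F : E → Ω → ℝ} (hmem : ∀ x ∈ s, MemLp (F x) p μ) (hnonneg : ∀ x ∈ s, 0 ≤ᵐ[μ] F x)
    (hconv : ∀ᵐ ω ∂μ, ConvexOn ℝ s fun x => F x ω) :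
    ConvexOn ℝ s fun x => (eLpNorm (F x) p μ).toReal := by
  refine ⟨hs, fun x hx y hy a b ha hb hab => ?_⟩
  have hpointwise : ∀ᵐ ω ∂μ, ‖F (a • x + b • y) ω‖ ≤ ‖(a • F x + b • F y) ω‖ := by
    filter_upwards [hconv, hnonneg _ (hs hx hy ha hb hab)] with ω hω hz
    have hle := hω.2 hx hy ha hb hab
    simp only [smul_eq_mul] at hle
    simp only [Pi.add_apply, Pi.smul_apply, smul_eq_mul, Real.norm_eq_abs]
    exact abs_le_abs_of_nonneg hz hle
  have hminkowski : eLpNorm (F (a • x + b • y)) p μ ≤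
      ‖a‖ₑ * eLpNorm (F x) p μ + ‖b‖ₑ * eLpNorm (F y) p μ := by
    calc eLpNorm (F (a • x + b • y)) p μ ≤ eLpNorm (a • F x + b • F y) p μ :=
          eLpNorm_mono_ae hpointwise
      _ ≤ eLpNorm (a • F x) p μ + eLpNorm (b • F y) p μ :=
          eLpNorm_add_le ((hmem x hx).1.const_smul a) ((hmem y hy).1.const_smul b) hp
      _ = _ := by rw [eLpNorm_const_smul, eLpNorm_const_smul]
  have hx_fin : ‖a‖ₑ * eLpNorm (F x) p μ ≠ ⊤ :=
    ENNReal.mul_ne_top enorm_ne_top (hmem x hx).eLpNorm_ne_top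
  have hy_fin : ‖b‖ₑ * eLpNorm (F y) p μ ≠ ⊤ :=
    ENNReal.mul_ne_top enorm_ne_top (hmem y hy).eLpNorm_ne_top
  refine (ENNReal.toReal_mono (ENNReal.add_ne_top.2 ⟨hx_fin, hy_fin⟩) hminkowski).trans_eq ?_
  rw [ENNReal.toReal_add hx_fin hy_fin]
  simp [ENNReal.toReal_mul, abs_of_nonneg ha, abs_of_nonneg hb]

theorem convexOn_max_const_sub_zero {s : Set E} {f : E → ℝ} (hf : ConcaveOn ℝ s f) (t : ℝ) :
    ConvexOn ℝ s fun x => max (t - f x) 0 := by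
  have := (hf.neg.add_const t).sup (convexOn_const 0 hf.1)
  exact this.congr fun x _ => by simp [sub_eq_neg_add]

theorem convexOn_pnorm_max_const_sub_zero [IsFiniteMeasure μ] {p : ℝ} (hp : 1 ≤ p)
    {h : E → Ω → ℝ} (hmem : ∀ x, MemLp (h x) (ENNReal.ofReal p) μ)
    (hconc : ∀ᵐ ω ∂μ, ConcaveOn ℝ univ fun x => h x ω) (t : ℝ) :
    ConvexOn ℝ univ fun x => pnorm μ p fun ω => max (t - h x ω) 0 := by
  have hmem' (x : E) : MemLp (fun ω => max (t - h x ω) 0) (ENNReal.ofReal p) μ :=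
    ((memLp_const t).sub (hmem x)).pos_part
  refine (convexOn_toReal_eLpNorm (by simpa using hp) convex_univ (fun x _ => hmem' x)
      (fun x _ => Filter.Eventually.of_forall fun ω => le_max_right _ _) ?_).congr
    fun x _ => (pnorm_eq_toReal_eLpNorm (by linarith) (hmem' x)).symm
  filter_upwards [hconc] with ω hω
  exact convexOn_max_const_sub_zero hω t

end

theorem stmt12_general {Ω : Type*} [MeasurableSpace Ω] (μ : Measure Ω) [IsProbabilityMeasure μ]
    (p : ℝ) (hp : 1 ≤ p) (d : ℕ)
    (ξ₀ : Ω → ℝ)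
    (h : (Fin d → ℝ) → Ω → ℝ)
    (hmem : ∀ x : Fin d → ℝ, MemLp (h x) (ENNReal.ofReal p) μ)
    (hconc : ∀ᵐ ω ∂μ, ConcaveOn ℝ Set.univ (fun x : Fin d → ℝ => h x ω)) :
    Convex ℝ {x : Fin d → ℝ |
      ∀ t : ℝ, pnorm μ p (fun ω => max (t - h x ω) 0) ≤
        pnorm μ p (fun ω => max (t - ξ₀ ω) 0)} := by
  intro x hx y hy a b ha hb hab t
  exact ((convexOn_pnorm_max_const_sub_zero hp hmem hconc t).convex_le _
    ⟨Set.mem_univ x, hx t⟩ ⟨Set.mem_univ y, hy t⟩ ha hb hab).2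

/-- If `x ↦ h(x, ω)` is concave for a.e. `ω`, then the set of `x` for which `h(x, ·)`
stochastically dominates the benchmark `ξ₀` with respect to `‖·‖_p` is convex. -/
theorem stmt12 {Ω : Type*} [MeasurableSpace Ω] (μ : Measure Ω) [IsProbabilityMeasure μ]
    (p : ℝ) (hp : 1 ≤ p) (d : ℕ)
    (ξ₀ : Ω → ℝ) (hξ₀ : MemLp ξ₀ (ENNReal.ofReal p) μ)
    (h : (Fin d → ℝ) → Ω → ℝ)
    (hmem : ∀ x : Fin d → ℝ, MemLp (h x) (ENNReal.ofReal p) μ)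
    (hconc : ∀ᵐ ω ∂μ, ConcaveOn ℝ Set.univ (fun x : Fin d → ℝ => h x ω)) :
    Convex ℝ {x : Fin d → ℝ |
      ∀ t : ℝ, pnorm μ p (fun ω => max (t - h x ω) 0) ≤
        pnorm μ p (fun ω => max (t - ξ₀ ω) 0)} :=
  stmt12_general μ p hp d ξ₀ h hmem hconc
end

section
/- Let (Ω, F, P) be a probability space, let p > 1 be a real number, let t ∈ ℝ, and let ξ : Ω → ℝ^d be a random vector with E[|ξ|^p] < ∞. Then the function g : ℝ^d → ℝ defined by g(x) := E[((t − ⟨x, ξ⟩)₊)^p] is differentiable on ℝ^d with gradient ∇g(x) = −p · E[((t − ⟨x, ξ⟩)₊)^{p−1} · ξ] for every x ∈ ℝ^d. -/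
/-!
The scalar map `s ↦ (s₊)^p` is differentiable with derivative `p (s₊)^(p-1)` when `p > 1`, so for
fixed `ω` the integrand is differentiable in `x` with gradient `-p ((t - ⟪x, ξ⟫)₊)^(p-1) ξ`. For `x`
in the unit ball around `x₀`, both `(t - ⟪x, ξ⟫)₊` and `‖ξ‖` are at most
`u = |t| + (‖x₀‖ + 1) ‖ξ‖`, so the gradient is dominated by `p u^p`, which is integrable since
`ξ ∈ Lᵖ`; differentiation under the integral sign then gives the claim.
-/

open MeasureTheory
open scoped InnerProductSpace

theorem hasDerivAt_max_zero_rpow {p : ℝ} (hp : 1 < p) (s : ℝ) :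
    HasDerivAt (fun s : ℝ => max s 0 ^ p) (p * max s 0 ^ (p - 1)) s := by
  have hp0 : p ≠ 0 := by positivity
  have hp1 : p - 1 ≠ 0 := sub_ne_zero.2 hp.ne'
  rcases lt_trichotomy s 0 with hs | rfl | hs
  · rw [max_eq_right hs.le, Real.zero_rpow hp1, mul_zero]
    refine (hasDerivAt_const s (0 : ℝ)).congr_of_eventuallyEq ?_
    filter_upwards [eventually_lt_nhds hs] with u hu
    rw [max_eq_right hu.le, Real.zero_rpow hp0]
  · rw [max_self, Real.zero_rpow hp1, mul_zero, ← hasDerivWithinAt_univ,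
      ← Set.Iic_union_Ici (a := 0)]
    refine HasDerivWithinAt.union ?_ ?_
    · refine (hasDerivWithinAt_const 0 _ (0 : ℝ)).congr (fun u hu => ?_) ?_ <;>
        simp_all [Real.zero_rpow hp0]
    · have h := (Real.hasDerivAt_rpow_const (x := 0) (Or.inr hp.le)).hasDerivWithinAt
        (s := Set.Ici 0)
      rw [Real.zero_rpow hp1, mul_zero] at h
      exact h.congr (fun u hu => by simp_all) (by simp)
  · rw [max_eq_left hs.le]
    refine (Real.hasDerivAt_rpow_const (Or.inr hp.le)).congr_of_eventuallyEq ?_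
    filter_upwards [eventually_gt_nhds hs] with u hu
    rw [max_eq_left hu.le]

theorem rpow_sub_one_mul_le_rpow {a b u p : ℝ} (ha : 0 ≤ a) (hau : a ≤ u) (hb : 0 ≤ b)
    (hbu : b ≤ u) (hp : 1 ≤ p) : a ^ (p - 1) * b ≤ u ^ p :=
  calc a ^ (p - 1) * b ≤ u ^ (p - 1) * u :=
      mul_le_mul (Real.rpow_le_rpow ha hau (by linarith)) hbu hb (Real.rpow_nonneg (hb.trans hbu) _)
    _ = u ^ p := by
      rw [← Real.rpow_add_one' (hb.trans hbu) (by linarith), sub_add_cancel]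

theorem integrable_add_mul_norm_rpow {Ω F : Type*} [MeasurableSpace Ω] {μ : Measure Ω}
    [IsFiniteMeasure μ] [NormedAddCommGroup F] {ξ : Ω → F} {p : ℝ} (hp : 0 < p)
    (hξm : AEStronglyMeasurable ξ μ) (hξ : Integrable (fun ω => ‖ξ ω‖ ^ p) μ) {a b : ℝ}
    (ha : 0 ≤ a) (hb : 0 ≤ b) : Integrable (fun ω => (a + b * ‖ξ ω‖) ^ p) μ := by
  have hξLp : MemLp ξ (ENNReal.ofReal p) μ :=
    (integrable_norm_rpow_iff hξm (by simpa using hp) ENNReal.ofReal_ne_top).1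
      (by rwa [ENNReal.toReal_ofReal hp.le])
  have h := ((memLp_const a).add (hξLp.norm.const_mul b)).integrable_norm_rpow'
  rw [ENNReal.toReal_ofReal hp.le] at h
  refine h.congr (.of_forall fun ω => ?_)
  simp only [Pi.add_apply, Real.norm_eq_abs]
  rw [abs_of_nonneg (by positivity)]

section InnerProductSpace

open InnerProductSpace (toDual)

variable {E : Type*} [NormedAddCommGroup E] [InnerProductSpace ℝ E]

theorem max_sub_inner_le {R : ℝ} (t : ℝ) {x : E} (hx : ‖x‖ ≤ R) (v : E) :
    max (t - ⟪x, v⟫_ℝ) 0 ≤ |t| + R * ‖v‖ := by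
  have hR : ‖x‖ * ‖v‖ ≤ R * ‖v‖ := by gcongr
  refine max_le ?_ (by nlinarith [abs_nonneg t, norm_nonneg x, norm_nonneg v])
  linarith [le_abs_self t, neg_abs_le ⟪x, v⟫_ℝ, abs_real_inner_le_norm x v]

theorem norm_max_sub_inner_rpow_smul_le {p R : ℝ} (hp : 1 ≤ p) (hR : 1 ≤ R) (t : ℝ) {x : E}
    (hx : ‖x‖ ≤ R) (v : E) :
    ‖(-(p * max (t - ⟪x, v⟫_ℝ) 0 ^ (p - 1))) • v‖ ≤ p * (|t| + R * ‖v‖) ^ p := by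
  have hc : 0 ≤ max (t - ⟪x, v⟫_ℝ) 0 := le_max_right _ _
  have hv : ‖v‖ ≤ |t| + R * ‖v‖ := by
    nlinarith [abs_nonneg t, norm_nonneg v]
  rw [norm_smul, norm_neg, Real.norm_of_nonneg (by positivity), mul_assoc]
  gcongr
  exact rpow_sub_one_mul_le_rpow hc (max_sub_inner_le t hx v) (norm_nonneg v) hv hp

variable [CompleteSpace E]

theorem hasGradientAt_inner_left (v x : E) : HasGradientAt (fun y => ⟪y, v⟫_ℝ) v x := by
  rw [hasGradientAt_iff_hasFDerivAt]
  refine (toDual ℝ E v).hasFDerivAt.congr_of_eventuallyEq (.of_forall fun y => ?_)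
  simp [real_inner_comm]

theorem hasGradientAt_max_sub_inner_rpow {p : ℝ} (hp : 1 < p) (t : ℝ) (v x : E) :
    HasGradientAt (fun y => max (t - ⟪y, v⟫_ℝ) 0 ^ p)
      ((-(p * max (t - ⟪x, v⟫_ℝ) 0 ^ (p - 1))) • v) x := by
  refine ((hasDerivAt_max_zero_rpow hp _).comp_hasFDerivAt x
    ((hasGradientAt_inner_left v x).hasFDerivAt.const_sub t)).congr_fderiv ?_
  ext y
  simp

theorem hasGradientAt_integral_max_sub_inner_rpow {Ω : Type*} [MeasurableSpace Ω]
    {μ : Measure Ω} [IsFiniteMeasure μ] {ξ : Ω → E} {p : ℝ} (hp : 1 < p) (t : ℝ)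
    (hξm : AEStronglyMeasurable ξ μ) (hξ : Integrable (fun ω => ‖ξ ω‖ ^ p) μ) (x₀ : E) :
    HasGradientAt (fun y => ∫ ω, max (t - ⟪y, ξ ω⟫_ℝ) 0 ^ p ∂μ)
      ((-p) • ∫ ω, max (t - ⟪x₀, ξ ω⟫_ℝ) 0 ^ (p - 1) • ξ ω ∂μ) x₀ := by
  have hp0 : 0 ≤ p := by linarith
  set u : Ω → ℝ := fun ω => |t| + (‖x₀‖ + 1) * ‖ξ ω‖
  have hx_norm {x : E} (hx : x ∈ Metric.ball x₀ 1) : ‖x‖ ≤ ‖x₀‖ + 1 := (norm_lt_of_mem_ball hx).le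
  have hmeas (x : E) {q : ℝ} (hq : 0 ≤ q) :
      AEStronglyMeasurable (fun ω => max (t - ⟪x, ξ ω⟫_ℝ) 0 ^ q) μ :=
    (by fun_prop (disch := exact hq) : Continuous fun v : E => max (t - ⟪x, v⟫_ℝ) 0 ^ q)
      |>.comp_aestronglyMeasurable hξm
  have hu_int : Integrable (fun ω => u ω ^ p) μ :=
    integrable_add_mul_norm_rpow (by linarith) hξm hξ (abs_nonneg t) (by positivity)
  have hF_le : ∀ᵐ ω ∂μ, ‖max (t - ⟪x₀, ξ ω⟫_ℝ) 0 ^ p‖ ≤ u ω ^ p := .of_forall fun ω => by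
    have hc : 0 ≤ max (t - ⟪x₀, ξ ω⟫_ℝ) 0 := le_max_right _ _
    rw [Real.norm_of_nonneg (by positivity)]
    exact Real.rpow_le_rpow hc
      (max_sub_inner_le t (hx_norm (Metric.mem_ball_self one_pos)) _) hp0
  have key := hasFDerivAt_integral_of_dominated_of_fderiv_le
    (F' := fun x ω => toDual ℝ E ((-(p * max (t - ⟪x, ξ ω⟫_ℝ) 0 ^ (p - 1))) • ξ ω))
    (bound := fun ω => p * u ω ^ p) (Metric.ball_mem_nhds x₀ one_pos)
    (.of_forall fun x => hmeas x hp0) (hu_int.mono' (hmeas x₀ hp0) hF_le)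
    ((toDual ℝ E).continuous.comp_aestronglyMeasurable
      (((hmeas x₀ (by linarith)).const_mul p).neg.smul hξm))
    (.of_forall fun ω x hx => by
      rw [LinearIsometryEquiv.norm_map]
      exact norm_max_sub_inner_rpow_smul_le hp.le (by simp) t (hx_norm hx) (ξ ω))
    (hu_int.const_mul p)
    (.of_forall fun ω x _ => hasGradientAt_max_sub_inner_rpow hp t (ξ ω) x)
  have hint :
      ∫ ω, toDual ℝ E ((-(p * max (t - ⟪x₀, ξ ω⟫_ℝ) 0 ^ (p - 1))) • ξ ω) ∂μ
        = toDual ℝ E ((-p) • ∫ ω, max (t - ⟪x₀, ξ ω⟫_ℝ) 0 ^ (p - 1) • ξ ω ∂μ) := by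
    rw [← integral_smul]
    simp_rw [← neg_mul, mul_smul]
    exact (toDual ℝ E).toContinuousLinearEquiv.integral_comp_comm _
  rw [hasGradientAt_iff_hasFDerivAt, ← hint]
  exact key

end InnerProductSpace

/-- For real `p > 1`, `t ∈ ℝ` and a random vector `ξ` with `E[|ξ|^p] < ∞`, the function
`g(x) = E[((t − ⟨x, ξ⟩)₊)^p]` on `ℝ^d` is differentiable with gradient
`∇g(x) = −p · E[((t − ⟨x, ξ⟩)₊)^{p−1} · ξ]`. -/
theorem stmt15 {Ω : Type*} [MeasurableSpace Ω] (μ : Measure Ω) [IsProbabilityMeasure μ]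
    (p : ℝ) (hp : 1 < p) (t : ℝ) (d : ℕ)
    (ξ : Ω → EuclideanSpace ℝ (Fin d)) (hξm : AEStronglyMeasurable ξ μ)
    (hξ : Integrable (fun ω => ‖ξ ω‖ ^ p) μ) :
    ∀ x : EuclideanSpace ℝ (Fin d),
      HasGradientAt (fun y : EuclideanSpace ℝ (Fin d) =>
          ∫ ω, max (t - (inner ℝ y (ξ ω) : ℝ)) 0 ^ p ∂μ)
        ((-p) • ∫ ω, (max (t - (inner ℝ x (ξ ω) : ℝ)) 0 ^ (p - 1)) • ξ ω ∂μ) x :=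
  hasGradientAt_integral_max_sub_inner_rpow hp t hξm hξ
end
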